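/- arXiv:1502.00418 — 2 statements merged into one kernel-verified Lean document; each statement's English description precedes it below -/
import Mathlib

section
/- Let X be a sequentially complete Hausdorff locally convex topological vector space over ℂ with the countable neighbourhood property: for every sequence (α_j)_j of continuous seminorms on X there exist a continuous seminorm α and positive scalars (λ_j)_j with α_j ≤ λ_j α for all j. Let (a_n)_{n≥1} be a sequence in X such that for every continuous linear functional x' on X there exists s ∈ ℂ for which the scalar series Σ_n x'(a_n) n^{−s} converges. Then there exists s ∈ ℂ such that the series Σ_n a_n n^{−s} converges in X. -/
/-!
If the scalar series `∑ x'(aₙ) n^{-s}` converges, its terms are bounded, so `x'(aₙ) = O(n^M)`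
for an integer `M ≥ Re s`. The heart of the matter is to make the exponent uniform: if for every
`m` some continuous seminorm `pₘ` had `pₘ(aₙ) ≠ O(nᵐ)`, the countable neighbourhood property would
give one continuous seminorm `α` dominating all the `pₘ`. Every functional in the dual of the
seminormed space `(X, α)` is continuous on `X`, so each of them is `O(n^M)` on `(aₙ)` for some `M`;
Baire category in that Banach dual and Hahn–Banach then give `α(aₙ) = O(nᵐ)` for a single `m`,
a contradiction. With a uniform `m`, the series `∑ aₙ n^{-(m+2)}` converges absolutely in every
continuous seminorm, so its partial sums are Cauchy and converge by sequential completeness.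
-/

open Filter Finset Topology Asymptotics

theorem exists_isBigO_top_of_forall_strongDual {𝕜 E β ι : Type*} [RCLike 𝕜]
    [SeminormedAddCommGroup E] [NormedSpace 𝕜 E] [Countable ι] {a : β → E} {w : ι → β → ℝ}
    (h : ∀ x' : StrongDual 𝕜 E, ∃ i, (fun b => x' (a b)) =O[⊤] w i) : ∃ i, a =O[⊤] w i := by
  let F : ι × ℕ → Set (StrongDual 𝕜 E) := fun k => {x' | ∀ b, ‖x' (a b)‖ ≤ k.2 * ‖w k.1 b‖}
  have hF_closed : ∀ k, IsClosed (F k) := fun k => by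
    simp only [F, Set.ofPred_forall]
    exact isClosed_iInter fun b =>
      isClosed_le (ContinuousLinearMap.apply 𝕜 𝕜 (a b)).continuous.norm continuous_const
  have hF_cover : ⋃ k, F k = Set.univ := by
    refine Set.eq_univ_of_forall fun x' => ?_
    obtain ⟨i, hi⟩ := h x'
    obtain ⟨C, hC⟩ := isBigO_top.1 hi
    exact Set.mem_iUnion.2 ⟨(i, ⌈C⌉₊), fun b => (hC b).trans (by gcongr; exact Nat.le_ceil C)⟩
  obtain ⟨⟨i, C⟩, x₀, hx₀⟩ := nonempty_interior_of_iUnion_of_closed hF_closed hF_cover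
  obtain ⟨r, hr, hball⟩ := Metric.mem_nhds_iff.1 (mem_interior_iff_mem_nhds.1 hx₀)
  -- Translating the ball `B(x₀, r)` bounds every functional of norm `≤ 1` by `2C / (r / 2)`,
  -- and Hahn–Banach norms `a b` by such a functional.
  refine ⟨i, isBigO_top.2 ⟨2 * C / (r / 2), fun b => ?_⟩⟩
  obtain ⟨g, hg, hga⟩ := exists_dual_vector'' 𝕜 (a b)
  have hx₀F : x₀ ∈ F (i, C) := hball (Metric.mem_ball_self hr)
  have hx₁F : x₀ + ((r / 2 : ℝ) : 𝕜) • g ∈ F (i, C) := hball <| by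
    rw [Metric.mem_ball, dist_eq_norm, add_sub_cancel_left, norm_smul, RCLike.norm_ofReal,
      abs_of_pos (half_pos hr)]
    calc r / 2 * ‖g‖ ≤ r / 2 * 1 := by gcongr
      _ < r := by linarith
  have key : (r / 2) * ‖a b‖ ≤ 2 * C * ‖w i b‖ := by
    calc (r / 2) * ‖a b‖ = ‖(x₀ + ((r / 2 : ℝ) : 𝕜) • g) (a b) - x₀ (a b)‖ := by
          simp [hga, abs_of_pos hr]
      _ ≤ ‖(x₀ + ((r / 2 : ℝ) : 𝕜) • g) (a b)‖ + ‖x₀ (a b)‖ := norm_sub_le _ _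
      _ ≤ C * ‖w i b‖ + C * ‖w i b‖ := add_le_add (hx₁F b) (hx₀F b)
      _ = 2 * C * ‖w i b‖ := by ring
  rw [div_mul_eq_mul_div, le_div_iff₀ (half_pos hr), mul_comm]
  exact key

theorem Seminorm.exists_isBigO_top_of_forall_dominated {𝕜 X β ι : Type*} [RCLike 𝕜]
    [AddCommGroup X] [Module 𝕜 X] [Countable ι] (α : Seminorm 𝕜 X) {a : β → X}
    {w : ι → β → ℝ}
    (h : ∀ f : X →ₗ[𝕜] 𝕜, (∃ C, ∀ y, ‖f y‖ ≤ C * α y) → ∃ i, (fun b => f (a b)) =O[⊤] w i) :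
    ∃ i, (fun b => α (a b)) =O[⊤] w i := by
  let : SeminormedAddCommGroup X := α.toSeminormedAddCommGroup
  let : NormedSpace 𝕜 X := ⟨fun c x => (map_smul_eq_mul α c x).le⟩
  obtain ⟨i, hi⟩ := exists_isBigO_top_of_forall_strongDual (𝕜 := 𝕜)
    fun x' => h x'.toLinearMap ⟨‖x'‖, x'.le_opNorm⟩
  exact ⟨i, hi.norm_left⟩

theorem LinearMap.continuous_of_norm_le_mul_seminorm {𝕜 X F : Type*} [NormedField 𝕜]
    [AddCommGroup X] [Module 𝕜 X] [TopologicalSpace X] [IsTopologicalAddGroup X]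
    [SeminormedAddCommGroup F] [Module 𝕜 F] (f : X →ₗ[𝕜] F) {α : Seminorm 𝕜 X}
    (hα : Continuous α) {C : ℝ} (hf : ∀ y, ‖f y‖ ≤ C * α y) : Continuous f := by
  refine continuous_of_continuousAt_zero f ?_
  rw [ContinuousAt, map_zero]
  refine squeeze_zero_norm hf ?_
  simpa using (hα.tendsto 0).const_mul C

def CountableNeighbourhoodProperty (𝕜 X : Type*) [NormedField 𝕜] [AddCommGroup X] [Module 𝕜 X]
    [TopologicalSpace X] : Prop :=
  ∀ αs : ℕ → Seminorm 𝕜 X, (∀ j, Continuous (αs j)) →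
    ∃ (α : Seminorm 𝕜 X) (lam : ℕ → ℝ), Continuous α ∧ (∀ j, 0 < lam j) ∧
      ∀ j, ∀ y : X, αs j y ≤ lam j * α y

theorem CountableNeighbourhoodProperty.exists_isBigO_top_of_forall_strongDual {𝕜 X β : Type*}
    [RCLike 𝕜] [AddCommGroup X] [Module 𝕜 X] [TopologicalSpace X] [IsTopologicalAddGroup X]
    (hX : CountableNeighbourhoodProperty 𝕜 X) {a : β → X} {w : ℕ → β → ℝ}
    (h : ∀ x' : X →L[𝕜] 𝕜, ∃ i, (fun b => x' (a b)) =O[⊤] w i) :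
    ∃ i, ∀ p : Seminorm 𝕜 X, Continuous p → (fun b => p (a b)) =O[⊤] w i := by
  by_contra! hbad
  choose p hp_cont hp_bad using hbad
  obtain ⟨α, lam, hα, -, hle⟩ := hX p hp_cont
  obtain ⟨i, hi⟩ := α.exists_isBigO_top_of_forall_dominated fun f ⟨_, hf⟩ =>
    h ⟨f, f.continuous_of_norm_le_mul_seminorm hα hf⟩
  refine hp_bad i (IsBigO.trans (isBigO_top.2 ⟨lam i, fun b => ?_⟩) hi)
  simpa only [Real.norm_of_nonneg (apply_nonneg _ _)] using hle i (a b)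

open scoped ComplexOrder in
theorem PolynormableSpace.of_locallyConvexSpace_real {𝕜 E : Type*} [RCLike 𝕜] [AddCommGroup E]
    [Module 𝕜 E] [Module ℝ E] [IsScalarTower ℝ 𝕜 E] [TopologicalSpace E] [IsTopologicalAddGroup E]
    [ContinuousSMul 𝕜 E] [LocallyConvexSpace ℝ E] : PolynormableSpace 𝕜 E :=
  have : ContinuousSMul ℝ E := IsScalarTower.continuousSMul 𝕜
  have : LocallyConvexSpace 𝕜 E := ⟨fun x => (LocallyConvexSpace.convex_basis (𝕜 := ℝ) x).congr
    (fun _ => and_congr_right fun _ => convex_RCLike_iff_convex_real.symm) fun _ _ => rfl⟩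
  LocallyConvexSpace.toPolynormableSpace

theorem WithSeminorms.cauchySeq_sum_range {𝕜 E ι : Type*} [NormedField 𝕜] [AddCommGroup E]
    [Module 𝕜 E] [UniformSpace E] [IsUniformAddGroup E] {p : SeminormFamily 𝕜 E ι}
    (hp : WithSeminorms p) {f : ℕ → E} (hf : ∀ i, Summable fun n => p i (f n)) :
    CauchySeq fun N => ∑ n ∈ range N, f n := by
  rw [CauchySeq, p.withSeminorms_iff_uniformSpace_eq_iInf.mp hp, cauchy_iInf_uniformSpace']
  intro i
  let := (p i).toSeminormedAddCommGroup
  exact cauchySeq_range_of_norm_bounded (hf i).hasSum.tendsto_sum_nat.cauchySeq fun n => le_rfl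

theorem tendsto_zero_of_tendsto_sum_range {G : Type*} [AddCommGroup G] [TopologicalSpace G]
    [IsTopologicalAddGroup G] {f : ℕ → G} {L : G}
    (h : Tendsto (fun N => ∑ n ∈ range N, f n) atTop (𝓝 L)) : Tendsto f atTop (𝓝 0) := by
  simpa [sum_range_succ] using (h.comp (tendsto_add_atTop_nat 1)).sub h

theorem exists_isBigO_top_pow_of_tendsto_dirichlet {z : ℕ → ℂ} {s L : ℂ}
    (h : Tendsto (fun N => ∑ n ∈ range N, ((n + 1 : ℕ) : ℂ) ^ (-s) * z n) atTop (𝓝 L)) :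
    ∃ M : ℕ, z =O[⊤] fun n => ((n + 1 : ℕ) : ℝ) ^ M := by
  obtain ⟨C, hC⟩ := (tendsto_zero_of_tendsto_sum_range h).norm.bddAbove_range
  refine ⟨⌈s.re⌉₊, isBigO_top.2 ⟨C, fun n => ?_⟩⟩
  have hn : (1 : ℝ) ≤ ((n + 1 : ℕ) : ℝ) := by simp
  have hz : z n = ((n + 1 : ℕ) : ℂ) ^ s * (((n + 1 : ℕ) : ℂ) ^ (-s) * z n) := by
    have hn₀ : ((n + 1 : ℕ) : ℂ) ≠ 0 := by exact_mod_cast n.succ_ne_zero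
    rw [Complex.cpow_neg, ← mul_assoc, mul_inv_cancel₀ (Complex.cpow_ne_zero_iff.2 (.inl hn₀)),
      one_mul]
  calc ‖z n‖ = ((n + 1 : ℕ) : ℝ) ^ s.re * ‖((n + 1 : ℕ) : ℂ) ^ (-s) * z n‖ := by
        rw [hz, norm_mul, Complex.norm_natCast_cpow_of_pos n.succ_pos, ← hz]
    _ ≤ ((n + 1 : ℕ) : ℝ) ^ (⌈s.re⌉₊ : ℝ) * C := by
        gcongr
        · exact Nat.le_ceil _
        · exact hC (Set.mem_range_self n)
    _ = C * ‖((n + 1 : ℕ) : ℝ) ^ ⌈s.re⌉₊‖ := by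
        rw [Real.rpow_natCast, mul_comm, Real.norm_of_nonneg (by positivity)]

theorem summable_seminorm_natCast_cpow_neg_smul {X : Type*} [AddCommGroup X] [Module ℂ X]
    (p : Seminorm ℂ X) {b : ℕ → X} {m : ℕ}
    (hb : (fun n => p (b n)) =O[⊤] fun n => ((n + 1 : ℕ) : ℝ) ^ m) :
    Summable fun n => p ((((n + 1 : ℕ) : ℂ) ^ (-((m + 2 : ℕ) : ℂ))) • b n) := by
  have hterm : (fun n => p ((((n + 1 : ℕ) : ℂ) ^ (-((m + 2 : ℕ) : ℂ))) • b n)) =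
      fun n => (((n + 1 : ℕ) : ℝ) ^ (m + 2))⁻¹ * p (b n) := by
    funext n
    rw [map_smul_eq_mul, Complex.cpow_neg, Complex.cpow_natCast, norm_inv, norm_pow,
      Complex.norm_natCast]
  rw [hterm]
  refine summable_of_isBigO ((summable_nat_add_iff 1).2 (Real.summable_nat_pow_inv.2
    one_lt_two)) ?_
  refine ((isBigO_refl (fun n : ℕ => (((n + 1 : ℕ) : ℝ) ^ (m + 2))⁻¹) _).mul
    (hb.mono le_top)).congr_right fun n => ?_
  rw [pow_add, mul_inv, mul_comm, ← mul_assoc, mul_inv_cancel₀ (by positivity), one_mul]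

theorem dirichlet_finite_abscissa_of_weak_cnp_general
    {X : Type*} [AddCommGroup X] [Module ℂ X] [UniformSpace X] [IsUniformAddGroup X]
    [ContinuousSMul ℂ X] [Module ℝ X] [IsScalarTower ℝ ℂ X]
    [LocallyConvexSpace ℝ X]
    (hseq : ∀ u : ℕ → X, CauchySeq u → ∃ x : X, Tendsto u atTop (𝓝 x))
    (hcnp : ∀ αs : ℕ → Seminorm ℂ X, (∀ j, Continuous (αs j)) →
      ∃ (α : Seminorm ℂ X) (lam : ℕ → ℝ), Continuous α ∧ (∀ j, 0 < lam j) ∧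
        ∀ j, ∀ y : X, αs j y ≤ lam j * α y)
    (a : ℕ → X)
    (h : ∀ x' : X →L[ℂ] ℂ, ∃ s : ℂ, ∃ L : ℂ, Tendsto
      (fun N : ℕ => ∑ n ∈ Finset.range N, (((n + 1 : ℕ) : ℂ) ^ (-s)) * x' (a (n + 1)))
      atTop (𝓝 L)) :
    ∃ s : ℂ, ∃ L : X, Tendsto
      (fun N : ℕ => ∑ n ∈ Finset.range N, (((n + 1 : ℕ) : ℂ) ^ (-s)) • a (n + 1))
      atTop (𝓝 L) := by
  have : PolynormableSpace ℂ X := .of_locallyConvexSpace_real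
  obtain ⟨m, hm⟩ := CountableNeighbourhoodProperty.exists_isBigO_top_of_forall_strongDual hcnp
    (a := fun n => a (n + 1)) fun x' => by
      obtain ⟨s, L, hL⟩ := h x'
      exact exists_isBigO_top_pow_of_tendsto_dirichlet hL
  obtain ⟨L, hL⟩ := hseq _ <| (PolynormableSpace.withSeminorms ℂ X).cauchySeq_sum_range
    fun p => summable_seminorm_natCast_cpow_neg_smul p.1 (hm p.1 p.2)
  exact ⟨((m + 2 : ℕ) : ℂ), L, hL⟩

/-- In a sequentially complete Hausdorff locally convex space with the countable
neighbourhood property, if each scalar Dirichlet series `∑ₙ x'(aₙ) n^{-s}` converges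
somewhere, then the vector-valued Dirichlet series `∑ₙ aₙ n^{-s}` converges somewhere. -/
theorem dirichlet_finite_abscissa_of_weak_cnp
    {X : Type*} [AddCommGroup X] [Module ℂ X] [UniformSpace X] [IsUniformAddGroup X]
    [ContinuousSMul ℂ X] [T2Space X] [Module ℝ X] [IsScalarTower ℝ ℂ X]
    [LocallyConvexSpace ℝ X]
    (hseq : ∀ u : ℕ → X, CauchySeq u → ∃ x : X, Tendsto u atTop (𝓝 x))
    (hcnp : ∀ αs : ℕ → Seminorm ℂ X, (∀ j, Continuous (αs j)) →
      ∃ (α : Seminorm ℂ X) (lam : ℕ → ℝ), Continuous α ∧ (∀ j, 0 < lam j) ∧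
        ∀ j, ∀ y : X, αs j y ≤ lam j * α y)
    (a : ℕ → X)
    (h : ∀ x' : X →L[ℂ] ℂ, ∃ s : ℂ, ∃ L : ℂ, Tendsto
      (fun N : ℕ => ∑ n ∈ Finset.range N, (((n + 1 : ℕ) : ℂ) ^ (-s)) * x' (a (n + 1)))
      atTop (𝓝 L)) :
    ∃ s : ℂ, ∃ L : X, Tendsto
      (fun N : ℕ => ∑ n ∈ Finset.range N, (((n + 1 : ℕ) : ℂ) ^ (-s)) • a (n + 1))
      atTop (𝓝 L) :=
  dirichlet_finite_abscissa_of_weak_cnp_general hseq hcnp a h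
end

section
/- Let X be a complex Banach space with G_a(X) < 1, where G_a(X) is the gap for absolute convergence of Dirichlet series in X. Then every sequence (x_n)_{n≥1} in X satisfying Σ_n |x'(x_n)| < ∞ for every continuous linear functional x' ∈ X' is unconditionally summable in X. -/
/-!
If `∑ xₙ` is weakly but not unconditionally summable, the Cauchy criterion yields disjoint
finite blocks whose sums `bₖ` satisfy `‖bₖ‖ ≥ ε > 0`. The `bₖ` are still weakly absolutely
summable, hence bounded by the uniform boundedness principle. The Dirichlet series `∑ bₖ k^{-s}`
then has `σ_c ≤ σ_a = 1` while `σ_a^w ≤ 0`, so `G_a(X) ≥ 1`.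
-/

open Filter Finset Topology

/-- The abscissa of convergence `σ_c(D)` of the Dirichlet series `D = ∑ₙ aₙ n^{-s}`,
as an extended real number. -/
noncomputable def dirichletSigmaC {X : Type*} [NormedAddCommGroup X] [NormedSpace ℂ X]
    (a : ℕ → X) : EReal :=
  sInf { x : EReal | ∃ r : ℝ, x = (r : EReal) ∧ ∀ s : ℂ, r < s.re →
    ∃ L : X, Tendsto
      (fun N : ℕ => ∑ n ∈ Finset.range N, (((n + 1 : ℕ) : ℂ) ^ (-s)) • a (n + 1))
      atTop (𝓝 L) }

/-- The abscissa of absolute convergence `σ_a(D)` of `D = ∑ₙ aₙ n^{-s}`. -/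
noncomputable def dirichletSigmaA {X : Type*} [SeminormedAddCommGroup X]
    (a : ℕ → X) : EReal :=
  sInf { x : EReal | ∃ r : ℝ, x = (r : EReal) ∧ ∀ σ : ℝ, r < σ →
    Summable (fun n : ℕ => ‖a (n + 1)‖ * ((n + 1 : ℕ) : ℝ) ^ (-σ)) }

/-- The abscissa of weak absolute convergence `σ_a^w(D) = sup_{x'} σ_a(x'(D))`. -/
noncomputable def dirichletSigmaAw {X : Type*} [NormedAddCommGroup X] [NormedSpace ℂ X]
    (a : ℕ → X) : EReal :=
  ⨆ x' : X →L[ℂ] ℂ, dirichletSigmaA (fun n => x' (a n))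

/-- The gap for absolute convergence of Dirichlet series in `X`:
`G_a(X) = sup_D (σ_a(D) - σ_a^w(D))`, the supremum over all Dirichlet series with
coefficients in `X` and finite abscissa of convergence. -/
noncomputable def dirichletGapA (X : Type*) [NormedAddCommGroup X] [NormedSpace ℂ X] :
    EReal :=
  sSup { g : EReal | ∃ a : ℕ → X, dirichletSigmaC a < ⊤ ∧
    g = dirichletSigmaA a - dirichletSigmaAw a }

open Function

lemma exists_pairwise_disjoint_norm_sum_ge_of_not_summable {E : Type*} [NormedAddCommGroup E]
    [CompleteSpace E] {x : ℕ → E} (hx : ¬ Summable x) :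
    ∃ ε > (0 : ℝ), ∃ F : ℕ → Finset ℕ, Pairwise (Disjoint on F) ∧ ∀ k, ε ≤ ‖∑ n ∈ F k, x n‖ := by
  rw [summable_iff_vanishing_norm] at hx
  push Not at hx
  obtain ⟨ε, hε, H⟩ := hx
  choose T hT_disjoint hT_norm using H
  -- `U k` collects the first `k` blocks; the next block `T (U k)` avoids all of them.
  let U : ℕ → Finset ℕ := fun k => Nat.rec ∅ (fun _ Uk => Uk ∪ T Uk) k
  have hU_mono : Monotone U := monotone_nat_of_le_succ fun k => subset_union_left
  refine ⟨ε, hε, fun k => T (U k), (pairwise_disjoint_on _).2 fun j k hjk => ?_,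
    fun k => hT_norm _⟩
  have hj : T (U j) ⊆ U k := subset_union_right.trans (hU_mono (Nat.succ_le_of_lt hjk))
  exact (disjoint_of_subset_right hj (hT_disjoint (U k))).symm

lemma summable_norm_sum_of_pairwise_disjoint {ι E : Type*} [SeminormedAddCommGroup E]
    {f : ι → E} (hf : Summable fun i => ‖f i‖) {F : ℕ → Finset ι}
    (hF : Pairwise (Disjoint on F)) :
    Summable fun k => ‖∑ i ∈ F k, f i‖ := by
  classical
  refine summable_of_sum_range_le (c := ∑' i, ‖f i‖) (fun _ => norm_nonneg _) fun K => ?_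
  calc ∑ k ∈ range K, ‖∑ i ∈ F k, f i‖
      ≤ ∑ k ∈ range K, ∑ i ∈ F k, ‖f i‖ := sum_le_sum fun k _ => norm_sum_le _ _
    _ = ∑ i ∈ (range K).biUnion F, ‖f i‖ := (sum_biUnion (hF.set_pairwise _)).symm
    _ ≤ ∑' i, ‖f i‖ := hf.sum_le_tsum _ fun _ _ => norm_nonneg _

lemma exists_norm_le_of_weakly_bounded {𝕜 E ι : Type*} [RCLike 𝕜] [NormedAddCommGroup E]
    [NormedSpace 𝕜 E] {b : ι → E} (hb : ∀ x' : E →L[𝕜] 𝕜, ∃ C, ∀ i, ‖x' (b i)‖ ≤ C) :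
    ∃ C, ∀ i, ‖b i‖ ≤ C := by
  obtain ⟨C, hC⟩ := banach_steinhaus (g := fun i => NormedSpace.inclusionInDoubleDual 𝕜 E (b i)) hb
  exact ⟨C, fun i => (NormedSpace.inclusionInDoubleDualLi 𝕜).norm_map (b i) ▸ hC i⟩

lemma summable_nat_succ_rpow_neg_iff {σ : ℝ} :
    Summable (fun n : ℕ => ((n + 1 : ℕ) : ℝ) ^ (-σ)) ↔ 1 < σ := by
  rw [summable_nat_add_iff (f := fun n : ℕ => (n : ℝ) ^ (-σ)) 1, Real.summable_nat_rpow]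
  constructor <;> intro h <;> linarith

section DirichletSeries

variable {X : Type*}

lemma dirichletSigmaA_le_of_summable [SeminormedAddCommGroup X] {a : ℕ → X} {r : ℝ}
    (ha : ∀ σ : ℝ, r < σ → Summable fun n : ℕ => ‖a (n + 1)‖ * ((n + 1 : ℕ) : ℝ) ^ (-σ)) :
    dirichletSigmaA a ≤ r :=
  sInf_le ⟨r, rfl, ha⟩

lemma dirichletSigmaA_nonpos_of_summable_norm [SeminormedAddCommGroup X] {a : ℕ → X}
    (ha : Summable fun n => ‖a (n + 1)‖) :
    dirichletSigmaA a ≤ ((0 : ℝ) : EReal) := by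
  refine dirichletSigmaA_le_of_summable fun σ hσ => ha.of_nonneg_of_le (fun n => by positivity)
    fun n => mul_le_of_le_one_right (norm_nonneg _) ?_
  exact Real.rpow_le_one_of_one_le_of_nonpos (by simp) (by linarith)

lemma dirichletSigmaA_le_one_of_norm_le [SeminormedAddCommGroup X] {a : ℕ → X} {C : ℝ}
    (hC : ∀ n, ‖a (n + 1)‖ ≤ C) :
    dirichletSigmaA a ≤ ((1 : ℝ) : EReal) := by
  refine dirichletSigmaA_le_of_summable fun σ hσ =>
    ((summable_nat_succ_rpow_neg_iff.2 hσ).mul_left C).of_nonneg_of_le (fun n => by positivity)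
      fun n => ?_
  exact mul_le_mul_of_nonneg_right (hC _) (by positivity)

lemma one_le_dirichletSigmaA_of_le_norm [SeminormedAddCommGroup X] {a : ℕ → X} {ε : ℝ}
    (hε : 0 < ε) (ha : ∀ n, ε ≤ ‖a (n + 1)‖) :
    ((1 : ℝ) : EReal) ≤ dirichletSigmaA a := by
  refine le_sInf ?_
  rintro _ ⟨r, rfl, hr⟩
  rw [EReal.coe_le_coe_iff]
  by_contra! hr1
  -- at the midpoint `σ` of `r` and `1`, the series dominates `ε ∑ n^{-σ} = ∞`
  have hσ := hr ((r + 1) / 2) (by linarith)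
  have hpow : Summable fun n : ℕ => ε * ((n + 1 : ℕ) : ℝ) ^ (-((r + 1) / 2)) :=
    hσ.of_nonneg_of_le (fun n => by positivity)
      fun n => mul_le_mul_of_nonneg_right (ha n) (by positivity)
  have := summable_nat_succ_rpow_neg_iff.1 ((summable_mul_left_iff hε.ne').1 hpow)
  linarith

variable [NormedAddCommGroup X] [NormedSpace ℂ X]

lemma dirichletSigmaC_le_dirichletSigmaA [CompleteSpace X] (a : ℕ → X) :
    dirichletSigmaC a ≤ dirichletSigmaA a := by
  refine sInf_le_sInf ?_
  rintro _ ⟨r, rfl, hr⟩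
  refine ⟨r, rfl, fun s hs => ⟨_, (Summable.of_norm ?_).hasSum.tendsto_sum_nat⟩⟩
  convert hr s.re hs using 2 with n
  rw [norm_smul, Complex.norm_natCast_cpow_of_pos n.succ_pos, Complex.neg_re, mul_comm]

lemma dirichletSigmaAw_nonpos_of_weakly_summable {a : ℕ → X}
    (ha : ∀ x' : X →L[ℂ] ℂ, Summable fun n => ‖x' (a (n + 1))‖) :
    dirichletSigmaAw a ≤ ((0 : ℝ) : EReal) :=
  iSup_le fun x' => dirichletSigmaA_nonpos_of_summable_norm (ha x')

lemma dirichletSigmaA_sub_dirichletSigmaAw_le_dirichletGapA {a : ℕ → X}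
    (ha : dirichletSigmaC a < ⊤) :
    dirichletSigmaA a - dirichletSigmaAw a ≤ dirichletGapA X :=
  le_sSup ⟨a, ha, rfl⟩

end DirichletSeries

/-- If `G_a(X) < 1`, then every weakly unconditionally summable sequence in the complex
Banach space `X` is unconditionally summable. -/
theorem weakly_summable_summable_of_gapA_lt_one
    (X : Type*) [NormedAddCommGroup X] [NormedSpace ℂ X] [CompleteSpace X]
    (h : dirichletGapA X < ((1 : ℝ) : EReal))
    (x : ℕ → X) (hx : ∀ x' : X →L[ℂ] ℂ, Summable (fun n => ‖x' (x n)‖)) :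
    Summable x := by
  by_contra hns
  obtain ⟨ε, hε, F, hF, hF_norm⟩ := exists_pairwise_disjoint_norm_sum_ge_of_not_summable hns
  -- shifted so that `a (k + 1) = ∑ n ∈ F k, x n`; the Dirichlet series never reads `a 0`
  set a : ℕ → X := fun k => ∑ n ∈ F (k - 1), x n
  have ha_weak (x' : X →L[ℂ] ℂ) : Summable fun k => ‖x' (a (k + 1))‖ := by
    simpa only [a, Nat.add_sub_cancel, map_sum] using
      summable_norm_sum_of_pairwise_disjoint (hx x') hF
  obtain ⟨C, hC⟩ := exists_norm_le_of_weakly_bounded fun x' =>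
    ⟨_, fun k => (ha_weak x').le_tsum k fun _ _ => norm_nonneg _⟩
  have hσa := dirichletSigmaA_le_one_of_norm_le hC
  have hσc : dirichletSigmaC a < ⊤ :=
    ((dirichletSigmaC_le_dirichletSigmaA a).trans hσa).trans_lt (EReal.coe_lt_top 1)
  have hgap : ((1 : ℝ) : EReal) ≤ dirichletGapA X :=
    calc ((1 : ℝ) : EReal) = ((1 : ℝ) : EReal) - ((0 : ℝ) : EReal) := by norm_num
      _ ≤ dirichletSigmaA a - dirichletSigmaAw a :=
          EReal.sub_le_sub (one_le_dirichletSigmaA_of_le_norm hε hF_norm)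
            (dirichletSigmaAw_nonpos_of_weakly_summable ha_weak)
      _ ≤ dirichletGapA X := dirichletSigmaA_sub_dirichletSigmaAw_le_dirichletGapA hσc
  exact h.not_ge hgap
end
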